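/- Let n ≥ 1 and let Γ_n = ℤ^n ≀ ℤ be the torsion-free lamplighter group. Then the abelianization Γ_n^{ab} is isomorphic to ℤ^{n+1}, and for every integer m ≥ 2 the lower central quotient γ_m(Γ_n)/γ_{m+1}(Γ_n) is isomorphic to ℤ^n. -/

import Mathlib

open LaurentPolynomial

/-- The base group of the torsion-free lamplighter group: the (additive group of the)
free module of rank `n` over the Laurent polynomial ring `ℤ[T,T⁻¹]`. -/
abbrev LampBase (n : ℕ) : Type := Fin n → LaurentPolynomial ℤ

/-- The shift automorphism of the base: multiplication by `T^z` in each coordinate. -/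
noncomputable def lampShift (n : ℕ) (z : ℤ) : LampBase n ≃+ LampBase n where
  toFun v := fun i => T z * v i
  invFun v := fun i => T (-z) * v i
  left_inv v := by funext i; simp [← mul_assoc, ← T_add]
  right_inv v := by funext i; simp [← mul_assoc, ← T_add]
  map_add' v w := by funext i; simp [mul_add]

/-- The action of `ℤ` on the base group, where `1` acts by multiplication by `T`
in each coordinate. -/
noncomputable def lampAction (n : ℕ) :
    Multiplicative ℤ →* MulAut (Multiplicative (LampBase n)) where
  toFun z := AddEquiv.toMultiplicative (lampShift n z.toAdd)
  map_one' := by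
    ext v : 1
    show Multiplicative.ofAdd ((lampShift n (1 : Multiplicative ℤ).toAdd) v.toAdd) = v
    simp [lampShift]
  map_mul' z w := by
    ext v : 1
    show Multiplicative.ofAdd ((lampShift n (z * w).toAdd) v.toAdd)
        = Multiplicative.ofAdd ((lampShift n z.toAdd)
            (Multiplicative.ofAdd ((lampShift n w.toAdd) v.toAdd)).toAdd)
    simp only [toAdd_mul, toAdd_ofAdd, lampShift, AddEquiv.coe_mk, Equiv.coe_fn_mk]
    congr 1
    funext i
    rw [T_add, mul_assoc]

/-- The torsion-free lamplighter group `ℤ^n ≀ ℤ`, realized as the semidirect product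
of the free `ℤ[T,T⁻¹]`-module of rank `n` by `ℤ`, where `1 ∈ ℤ` acts by multiplication
by `T` in each coordinate. -/
abbrev Lamplighter (n : ℕ) : Type :=
  SemidirectProduct (Multiplicative (LampBase n)) (Multiplicative ℤ) (lampAction n)

/-- Two groups have the same finite quotients if every finite group is a quotient of one
iff it is a quotient of the other. -/
def SameFiniteQuotients (G H : Type*) [Group G] [Group H] : Prop :=
  ∀ (Q : Type) (_ : Group Q) (_ : Finite Q),
    (∃ f : G →* Q, Function.Surjective f) ↔ (∃ f : H →* Q, Function.Surjective f)

/-- A group is residually finite if every nontrivial element is detected by a homomorphism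
to some finite group. -/
def ResiduallyFinite (G : Type*) [Group G] : Prop :=
  ∀ g : G, g ≠ 1 → ∃ (Q : Type) (_ : Group Q) (_ : Finite Q) (f : G →* Q), f g ≠ 1

/-- The `k`-th lower central quotient `γ_{k+1}(G)/γ_{k+2}(G)` (with Mathlib's indexing
`lowerCentralSeries G k = γ_{k+1}(G)`, so `LowerCentralQuotient G k` is the quotient of
the `(k+1)`-st term of the lower central series by the `(k+2)`-nd). -/
def LowerCentralQuotient (G : Type*) [Group G] (k : ℕ) : Type _ :=
  Subgroup.lowerCentralSeries (⊤ : Subgroup G) k ⧸ ((Subgroup.lowerCentralSeries (⊤ : Subgroup G) (k + 1)).subgroupOf (Subgroup.lowerCentralSeries (⊤ : Subgroup G) k))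

noncomputable instance (G : Type*) [Group G] (k : ℕ) : Group (LowerCentralQuotient G k) :=
  inferInstanceAs (Group (_ ⧸ _))

/-!
Write `B = ℤ[T,T⁻¹]^n` for the base and `I = (T - 1)` for the augmentation ideal. The commutator
of `(a, s)` and `(b, t)` in `B ⋊ ℤ` is `((T^s - 1) b - (T^t - 1) a, 0)`, and `T - 1` divides
every `T^s - 1`; conversely the commutator of `(-(T - 1)^k w, 0)` with the generator `(0, 1)` of
`ℤ` is `((T - 1)^(k+1) w, 0)`. Hence `γ_{k+1}(Γ_n) = I^k B` for `k ≥ 1`. Evaluation at `T = 1`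
identifies `B / I B` with `ℤ^n`, and `T - 1` is a nonzerodivisor, so
`I^k B / I^(k+1) B ≅ B / I B ≅ ℤ^n`. For the abelianization, the map `Γ_n → ℤ × ℤ^n` sending
`(a, s)` to `s` and the value of `a` at `T = 1` is onto with kernel `I B = γ_2(Γ_n)`.
-/

namespace LaurentPolynomial

variable {R : Type*} [CommRing R]

theorem T_one_sub_one_dvd_T_sub_one (z : ℤ) : (T 1 - 1 : R[T;T⁻¹]) ∣ T z - 1 := by
  have h_nat (m : ℕ) : (T 1 - 1 : R[T;T⁻¹]) ∣ T m - 1 := by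
    simpa [T_pow] using sub_one_dvd_pow_sub_one (T 1 : R[T;T⁻¹]) m
  obtain ⟨m, rfl | rfl⟩ := Int.eq_nat_or_neg z
  · exact h_nat m
  · have h : (T (-m) - 1 : R[T;T⁻¹]) = -T (-m) * (T m - 1) := by
      rw [neg_mul, mul_sub, ← T_add, neg_add_cancel, T_zero, mul_one, neg_sub]
    rw [h]
    exact dvd_mul_of_dvd_right (h_nat m) _

theorem T_one_sub_one_ne_zero [Nontrivial R] : (T 1 - 1 : R[T;T⁻¹]) ≠ 0 := by
  rw [sub_ne_zero, ← T_zero]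
  intro h
  have h_deg := congrArg degree h
  rw [degree_T, degree_T] at h_deg
  exact one_ne_zero (WithBot.coe_injective h_deg)

noncomputable def augmentation : R[T;T⁻¹] →+* R := eval₂ (RingHom.id R) 1

@[simp]
theorem augmentation_T (z : ℤ) : augmentation (T z : R[T;T⁻¹]) = 1 := by
  simp [augmentation, eval₂_T]

@[simp]
theorem augmentation_C (r : R) : augmentation (C r : R[T;T⁻¹]) = r := by
  simp [augmentation, eval₂_C]

theorem T_one_sub_one_dvd_sub_C_augmentation (f : R[T;T⁻¹]) :
    (T 1 - 1 : R[T;T⁻¹]) ∣ f - C (augmentation f) := by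
  induction f using LaurentPolynomial.induction_on' with
  | add p q hp hq => simpa only [map_add, add_sub_add_comm] using dvd_add hp hq
  | C_mul_T z r =>
    simpa [mul_sub] using dvd_mul_of_dvd_right (T_one_sub_one_dvd_T_sub_one z) (C r)

theorem augmentation_eq_zero_iff {f : R[T;T⁻¹]} :
    augmentation f = 0 ↔ (T 1 - 1 : R[T;T⁻¹]) ∣ f := by
  refine ⟨fun h => by simpa [h] using T_one_sub_one_dvd_sub_C_augmentation f, ?_⟩
  rintro ⟨g, rfl⟩
  simp

end LaurentPolynomial

theorem LowerCentralQuotient.nonempty_mulEquiv {G Q : Type*} [Group G] [Group Q] {k : ℕ}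
    {H K : Subgroup G} (hH : (⊤ : Subgroup G).lowerCentralSeries k = H)
    (hK : (⊤ : Subgroup G).lowerCentralSeries (k + 1) = K) (f : H →* Q)
    (hf : Function.Surjective f) (hker : f.ker = K.subgroupOf H) :
    Nonempty (LowerCentralQuotient G k ≃* Q) := by
  subst hH hK
  exact ⟨(QuotientGroup.quotientMulEquivOfEq hker.symm).trans
    (QuotientGroup.quotientKerEquivOfSurjective f hf)⟩

theorem Abelianization.nonempty_mulEquiv {G Q : Type*} [Group G] [Group Q] (f : G →* Q)
    (hf : Function.Surjective f) (hker : f.ker = commutator G) :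
    Nonempty (Abelianization G ≃* Q) :=
  ⟨(QuotientGroup.quotientMulEquivOfEq hker.symm).trans
    (QuotientGroup.quotientKerEquivOfSurjective f hf)⟩

open scoped commutatorElement

namespace Lamplighter

variable {n : ℕ}

local notation "δ" => (T 1 - 1 : LaurentPolynomial ℤ)

noncomputable def augmentationPi (n : ℕ) : LampBase n →+ (Fin n → ℤ) :=
  augmentation.toAddMonoidHom.compLeft (Fin n)

@[simp]
theorem augmentationPi_apply (v : LampBase n) (i : Fin n) :
    augmentationPi n v i = augmentation (v i) := rfl

theorem augmentationPi_T_smul (z : ℤ) (v : LampBase n) :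
    augmentationPi n ((T z : ℤ[T;T⁻¹]) • v) = augmentationPi n v := by
  ext i; simp

theorem augmentationPi_surjective : Function.Surjective (augmentationPi n) :=
  fun a => ⟨fun i => C (a i), by ext i; simp⟩

theorem augmentationPi_eq_zero_iff {v : LampBase n} :
    augmentationPi n v = 0 ↔ ∃ w, v = δ • w := by
  constructor
  · intro h
    choose w hw using fun i => augmentation_eq_zero_iff.mp (congrFun h i)
    exact ⟨w, funext hw⟩
  · rintro ⟨w, rfl⟩
    ext i; simp

theorem toAdd_lampAction_apply (z : Multiplicative ℤ) (a : Multiplicative (LampBase n)) :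
    (lampAction n z a).toAdd = (T z.toAdd : ℤ[T;T⁻¹]) • a.toAdd := rfl

theorem commutatorElement_right (g h : Lamplighter n) : ⁅g, h⁆.right = 1 :=
  commutatorElement_eq_one_iff_commute.mpr (mul_comm g.right h.right)

theorem toAdd_commutatorElement_left (g h : Lamplighter n) :
    ⁅g, h⁆.left.toAdd
      = (T g.right.toAdd - 1 : ℤ[T;T⁻¹]) • h.left.toAdd
        - (T h.right.toAdd - 1 : ℤ[T;T⁻¹]) • g.left.toAdd := by
  simp only [commutatorElement_def, SemidirectProduct.mul_left, SemidirectProduct.inv_left,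
    SemidirectProduct.mul_right, SemidirectProduct.inv_right, toAdd_mul, toAdd_inv,
    toAdd_lampAction_apply, smul_neg, smul_smul, ← T_add, add_neg_cancel_comm, add_neg_cancel,
    T_zero]
  module

variable (n) in
noncomputable def inlAugPowSmul (k : ℕ) : Multiplicative (LampBase n) →* Lamplighter n :=
  SemidirectProduct.inl.comp
    (DistribSMul.toAddMonoidHom (LampBase n) (δ ^ k)).toMultiplicative

variable (n) in
/-- The subgroup `I^k B` of the base. -/
noncomputable abbrev augPowSubgroup (k : ℕ) : Subgroup (Lamplighter n) :=
  (inlAugPowSmul n k).range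

@[simp]
theorem inlAugPowSmul_right (k : ℕ) (w : Multiplicative (LampBase n)) :
    (inlAugPowSmul n k w).right = 1 := rfl

@[simp]
theorem toAdd_inlAugPowSmul_left (k : ℕ) (w : Multiplicative (LampBase n)) :
    (inlAugPowSmul n k w).left.toAdd = δ ^ k • w.toAdd := rfl

theorem inlAugPowSmul_injective (k : ℕ) : Function.Injective (inlAugPowSmul n k) :=
  SemidirectProduct.inl_injective.comp <| Multiplicative.ofAdd.injective.comp <|
    (smul_right_injective (LampBase n) (pow_ne_zero k T_one_sub_one_ne_zero)).comp
      Multiplicative.toAdd.injective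

theorem inlAugPowSmul_succ (k : ℕ) (w : Multiplicative (LampBase n)) :
    inlAugPowSmul n (k + 1) w = inlAugPowSmul n k (.ofAdd (δ • w.toAdd)) := by
  simp [inlAugPowSmul, pow_succ, mul_smul]

theorem mem_augPowSubgroup {k : ℕ} {x : Lamplighter n} :
    x ∈ augPowSubgroup n k ↔ x.right = 1 ∧ ∃ w, x.left.toAdd = δ ^ k • w := by
  constructor
  · rintro ⟨w, rfl⟩
    exact ⟨rfl, w.toAdd, rfl⟩
  · rintro ⟨hright, w, hleft⟩
    exact ⟨.ofAdd w, SemidirectProduct.ext hleft.symm hright.symm⟩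

theorem inlAugPowSmul_mem_succ_iff {k : ℕ} {w : Multiplicative (LampBase n)} :
    inlAugPowSmul n k w ∈ augPowSubgroup n (k + 1) ↔ augmentationPi n w.toAdd = 0 := by
  simp only [augPowSubgroup, MonoidHom.mem_range, inlAugPowSmul_succ,
    (inlAugPowSmul_injective k).eq_iff, augmentationPi_eq_zero_iff]
  exact ⟨fun ⟨v, hv⟩ => ⟨v.toAdd, by rw [← hv, toAdd_ofAdd]⟩,
    fun ⟨v, hv⟩ => ⟨.ofAdd v, by rw [toAdd_ofAdd, ← hv, ofAdd_toAdd]⟩⟩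

theorem commutator_augPowSubgroup_top_le (k : ℕ) :
    ⁅augPowSubgroup n k, ⊤⁆ ≤ augPowSubgroup n (k + 1) := by
  rw [Subgroup.commutator_le]
  rintro g hg h -
  obtain ⟨hg_right, w, hg_left⟩ := mem_augPowSubgroup.mp hg
  obtain ⟨u, hu⟩ := T_one_sub_one_dvd_T_sub_one (R := ℤ) h.right.toAdd
  refine mem_augPowSubgroup.mpr ⟨commutatorElement_right g h, -(u • w), ?_⟩
  rw [toAdd_commutatorElement_left, hg_right, hg_left, hu, toAdd_one, T_zero, pow_succ]
  module

theorem augPowSubgroup_succ_le_commutator (k : ℕ) :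
    augPowSubgroup n (k + 1) ≤ ⁅augPowSubgroup n k, ⊤⁆ := by
  rintro _ ⟨w, rfl⟩
  have h_comm : inlAugPowSmul n (k + 1) w
      = ⁅inlAugPowSmul n k w⁻¹, SemidirectProduct.inr (.ofAdd 1)⁆ := by
    refine SemidirectProduct.ext (Multiplicative.toAdd.injective ?_)
      (commutatorElement_right _ _).symm
    simp only [toAdd_commutatorElement_left, inlAugPowSmul_right, toAdd_inlAugPowSmul_left,
      SemidirectProduct.left_inr, SemidirectProduct.right_inr, toAdd_one, toAdd_ofAdd, toAdd_inv,
      T_zero, pow_succ]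
    module
  rw [h_comm]
  exact Subgroup.commutator_mem_commutator ⟨w⁻¹, rfl⟩ (Subgroup.mem_top _)

theorem commutator_eq_augPowSubgroup_one : commutator (Lamplighter n) = augPowSubgroup n 1 := by
  refine le_antisymm ?_ ((augPowSubgroup_succ_le_commutator 0).trans
    (Subgroup.commutator_mono le_top le_rfl))
  rw [commutator_def, Subgroup.commutator_le]
  intro g _ h _
  obtain ⟨u, hu⟩ := T_one_sub_one_dvd_T_sub_one (R := ℤ) g.right.toAdd
  obtain ⟨v, hv⟩ := T_one_sub_one_dvd_T_sub_one (R := ℤ) h.right.toAdd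
  refine mem_augPowSubgroup.mpr
    ⟨commutatorElement_right g h, u • h.left.toAdd - v • g.left.toAdd, ?_⟩
  rw [toAdd_commutatorElement_left, hu, hv, pow_one]
  module

theorem lowerCentralSeries_succ_eq_augPowSubgroup (k : ℕ) :
    (⊤ : Subgroup (Lamplighter n)).lowerCentralSeries (k + 1) = augPowSubgroup n (k + 1) := by
  induction k with
  | zero => exact commutator_eq_augPowSubgroup_one
  | succ k ih =>
    rw [Subgroup.lowerCentralSeries_succ, ih]
    exact le_antisymm (commutator_augPowSubgroup_top_le _) (augPowSubgroup_succ_le_commutator _)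

variable (n) in
noncomputable def augPowSubgroupHom (k : ℕ) :
    augPowSubgroup n k →* Multiplicative (Fin n → ℤ) :=
  (augmentationPi n).toMultiplicative.comp
    (MonoidHom.ofInjective (inlAugPowSmul_injective k)).symm.toMonoidHom

theorem augPowSubgroupHom_apply (k : ℕ) (w : Multiplicative (LampBase n)) :
    augPowSubgroupHom n k ⟨inlAugPowSmul n k w, w, rfl⟩ = .ofAdd (augmentationPi n w.toAdd) := by
  have h_symm : (MonoidHom.ofInjective (inlAugPowSmul_injective k)).symm
      ⟨inlAugPowSmul n k w, w, rfl⟩ = w :=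
    (MonoidHom.ofInjective _).symm_apply_eq.mpr (Subtype.ext (MonoidHom.ofInjective_apply _).symm)
  rw [augPowSubgroupHom, MonoidHom.comp_apply, MulEquiv.coe_toMonoidHom, h_symm]
  rfl

theorem augPowSubgroupHom_surjective (k : ℕ) : Function.Surjective (augPowSubgroupHom n k) := by
  intro a
  obtain ⟨v, hv⟩ := augmentationPi_surjective a.toAdd
  exact ⟨⟨_, .ofAdd v, rfl⟩, by rw [augPowSubgroupHom_apply, toAdd_ofAdd, hv, ofAdd_toAdd]⟩

theorem ker_augPowSubgroupHom (k : ℕ) :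
    (augPowSubgroupHom n k).ker = (augPowSubgroup n (k + 1)).subgroupOf (augPowSubgroup n k) := by
  ext ⟨_, w, rfl⟩
  rw [MonoidHom.mem_ker, Subgroup.mem_subgroupOf, augPowSubgroupHom_apply,
    inlAugPowSmul_mem_succ_iff]
  exact ofAdd_eq_one

variable (n) in
noncomputable def augmentationHom : Lamplighter n →* Multiplicative (Fin n → ℤ) :=
  SemidirectProduct.lift (augmentationPi n).toMultiplicative 1 fun z => MonoidHom.ext fun a => by
    simp [toAdd_lampAction_apply, augmentationPi_T_smul]

theorem augmentationHom_apply (x : Lamplighter n) :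
    augmentationHom n x = .ofAdd (augmentationPi n x.left.toAdd) :=
  mul_one _

variable (n) in
noncomputable def abelianizationHom :
    Lamplighter n →* Multiplicative ℤ × Multiplicative (Fin n → ℤ) :=
  SemidirectProduct.rightHom.prod (augmentationHom n)

theorem ker_abelianizationHom : (abelianizationHom n).ker = augPowSubgroup n 1 := by
  ext x
  rw [MonoidHom.mem_ker, abelianizationHom, MonoidHom.prod_apply, Prod.mk_eq_one,
    augmentationHom_apply, ofAdd_eq_one, augmentationPi_eq_zero_iff, mem_augPowSubgroup, pow_one]
  rfl

theorem abelianizationHom_surjective : Function.Surjective (abelianizationHom n) := by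
  rintro ⟨z, a⟩
  obtain ⟨v, hv⟩ := augmentationPi_surjective a.toAdd
  refine ⟨SemidirectProduct.inl (.ofAdd v) * SemidirectProduct.inr z, ?_⟩
  simp [abelianizationHom, augmentationHom, hv]

end Lamplighter

open Lamplighter in
theorem lamplighter_abelianization_and_lowerCentralQuotients_general (n : ℕ) :
    Nonempty (Abelianization (Lamplighter n) ≃* Multiplicative (Fin (n + 1) → ℤ)) ∧
      ∀ m : ℕ, 2 ≤ m →
        Nonempty (LowerCentralQuotient (Lamplighter n) (m - 1) ≃*
          Multiplicative (Fin n → ℤ)) := by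
  constructor
  · obtain ⟨e⟩ := Abelianization.nonempty_mulEquiv (abelianizationHom n)
      abelianizationHom_surjective
      (ker_abelianizationHom.trans commutator_eq_augPowSubgroup_one.symm)
    exact ⟨e.trans <| (MulEquiv.prodMultiplicative ..).symm.trans
      (Fin.consLinearEquiv ℤ fun _ => ℤ).toAddEquiv.toMultiplicative⟩
  · intro m hm
    obtain ⟨k, rfl⟩ : ∃ k, m = k + 2 := ⟨m - 2, by omega⟩
    exact LowerCentralQuotient.nonempty_mulEquiv (lowerCentralSeries_succ_eq_augPowSubgroup k)
      (lowerCentralSeries_succ_eq_augPowSubgroup (k + 1)) _ (augPowSubgroupHom_surjective _)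
      (ker_augPowSubgroupHom _)

/-- For the torsion-free lamplighter group `Γ_n = ℤ^n ≀ ℤ`: the abelianization is
isomorphic to `ℤ^{n+1}`, and `γ_m(Γ_n)/γ_{m+1}(Γ_n) ≅ ℤ^n` for every `m ≥ 2`. -/
theorem lamplighter_abelianization_and_lowerCentralQuotients (n : ℕ) (hn : 1 ≤ n) :
    Nonempty (Abelianization (Lamplighter n) ≃* Multiplicative (Fin (n + 1) → ℤ)) ∧
      ∀ m : ℕ, 2 ≤ m →
        Nonempty (LowerCentralQuotient (Lamplighter n) (m - 1) ≃*
          Multiplicative (Fin n → ℤ)) :=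
  lamplighter_abelianization_and_lowerCentralQuotients_general n
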